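/- arXiv:1502.01633 — 4 statements merged into one kernel-verified Lean document; each statement's English description precedes it below -/
import Mathlib

section
/- The sequential remove operation on a sorted linked list preserves sortedness and correctly updates the represented set: if remove(v) is executed on a strictly increasing list representing q (locating the first node with value ≥ v and unlinking it when its value equals v), then the resulting list is strictly increasing and represents q \ {v}, and remove returns true iff v ∈ q. -/
abbrev E := WithBot (WithTop ℤ)

def iE (v : ℤ) : E := ((v : WithTop ℤ) : E)

/-- Sequential remove: locate the first position whose value is `≥ v`;
if the value there equals `v`, unlink it and return `true`,
otherwise return `false` leaving the list unchanged. -/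
noncomputable def listRemove (L : List E) (v : ℤ) : List E × Bool :=
  if iE v ∈ L then
    (L.takeWhile (fun y => decide (y < iE v)) ++
       (L.dropWhile (fun y => decide (y < iE v))).tail, true)
  else (L, false)

/-! On a strictly increasing list the first entry `≥ v` is `v` itself whenever `v` occurs, so
`remove v` is exactly `List.erase`; erasing preserves strict monotonicity, and a strictly
increasing list has no duplicates, so erasing removes precisely `v`. -/

namespace List

variable {α : Type*} [LinearOrder α]

theorem takeWhile_lt_append_tail_dropWhile_lt_eq_erase {L : List α} (hL : L.Pairwise (· < ·))
    {a : α} (ha : a ∈ L) :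
    L.takeWhile (fun y => decide (y < a)) ++ (L.dropWhile (fun y => decide (y < a))).tail =
      L.erase a := by
  induction L with
  | nil => simp at ha
  | cons b l ih =>
    obtain ⟨hb, hl⟩ := pairwise_cons.mp hL
    by_cases hba : b < a
    · have hal : a ∈ l := (mem_cons.mp ha).resolve_left hba.ne'
      rw [takeWhile_cons_of_pos (by simpa using hba), dropWhile_cons_of_pos (by simpa using hba),
        erase_cons_tail (by simpa using hba.ne), cons_append, ih hl hal]
    · -- `a` cannot sit further down the list, where everything exceeds `b`
      have hab : b = a := by
        rcases mem_cons.mp ha with rfl | hal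
        · rfl
        · exact absurd (hb a hal) hba
      subst hab
      simp

end List

theorem iE_injective : Function.Injective iE := fun _ _ h => by simpa [iE] using h

theorem listRemove_eq_erase {L : List E} (hL : L.Pairwise (· < ·)) (v : ℤ) :
    listRemove L v = (L.erase (iE v), decide (iE v ∈ L)) := by
  unfold listRemove
  split_ifs with hv
  · simp [List.takeWhile_lt_append_tail_dropWhile_lt_eq_erase hL hv, hv]
  · simp [List.erase_of_not_mem hv, hv]

theorem stmt6_general (L : List E) (hchain : L.Chain' (· < ·)) (v : ℤ) :
    ((listRemove L v).1.Chain' (· < ·)) ∧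
    (∀ w : ℤ, iE w ∈ (listRemove L v).1 ↔ (iE w ∈ L ∧ w ≠ v)) ∧
    ((listRemove L v).2 = true ↔ iE v ∈ L) := by
  have hL : L.Pairwise (· < ·) := List.isChain_iff_pairwise.mp hchain
  rw [listRemove_eq_erase hL]
  refine ⟨List.isChain_iff_pairwise.mpr (hL.erase _), fun w => ?_, by simp⟩
  rw [hL.nodup.mem_erase_iff, iE_injective.ne_iff]
  exact and_comm

theorem stmt6 (L : List E) (hchain : L.Chain' (· < ·))
    (hhead : L.head? = some ⊥) (hlast : L.getLast? = some ⊤) (v : ℤ) :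
    ((listRemove L v).1.Chain' (· < ·)) ∧
    (∀ w : ℤ, iE w ∈ (listRemove L v).1 ↔ (iE w ∈ L ∧ w ≠ v)) ∧
    ((listRemove L v).2 = true ↔ iE v ∈ L) :=
  stmt6_general L hchain v
end

section
/- At all times in a Versioned List execution, the values along the chain of nodes reachable from head are strictly increasing, ending at tail with value +∞. -/
/-- A write of the Versioned List on the reachable chain: an insert links a new
node with value strictly between two adjacent nodes; a remove unlinks a node
(setting `prev.next := curr.next`). -/
inductive WriteStep : List E → List E → Prop
  | ins (c1 c2 : List E) (a b x : E) : a < x → x < b →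
      WriteStep (c1 ++ a :: b :: c2) (c1 ++ a :: x :: b :: c2)
  | del (c1 c2 : List E) (a x b : E) :
      WriteStep (c1 ++ a :: x :: b :: c2) (c1 ++ a :: b :: c2)

lemma last_cons (l1 l2 : List E) (a : E) : (l1 ++ a :: l2).getLast? = (a :: l2).getLast? := by
  rw [List.getLast?_append]
  cases h : (a :: l2).getLast? with
  | none => simp [List.getLast?_eq_none_iff] at h
  | some v => simp

lemma head_cons (l1 l2 : List E) (a : E) : (l1 ++ a :: l2).head? = (l1 ++ [a]).head? := by
  cases l1 <;> simp

lemma ins_pairwise {c1 c2 : List E} {a b x : E} (hax : a < x) (hxb : x < b)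
    (h : (c1 ++ a :: b :: c2).Pairwise (· < ·)) :
    (c1 ++ a :: x :: b :: c2).Pairwise (· < ·) := by
  simp only [List.pairwise_append, List.pairwise_cons, List.mem_cons, List.mem_append] at *
  obtain ⟨h1, ⟨ha, ⟨hb, h2⟩⟩, h3⟩ := h
  refine ⟨h1, ⟨?_, ⟨?_, hb, h2⟩⟩, ?_⟩
  · rintro y (rfl | rfl | hy)
    · exact hax
    · exact ha y (Or.inl rfl)
    · exact ha y (Or.inr hy)
  · rintro y (rfl | hy)
    · exact hxb
    · exact hxb.trans (hb y hy)
  · rintro y hy z (rfl | rfl | rfl | hz)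
    · exact h3 y hy z (Or.inl rfl)
    · exact (h3 y hy a (Or.inl rfl)).trans hax
    · exact h3 y hy z (Or.inr (Or.inl rfl))
    · exact h3 y hy z (Or.inr (Or.inr hz))

lemma step_pres {c d : List E} (h : WriteStep c d)
    (hc : c.Pairwise (· < ·)) (hh : c.head? = some ⊥) (hl : c.getLast? = some ⊤) :
    d.Pairwise (· < ·) ∧ d.head? = some ⊥ ∧ d.getLast? = some ⊤ := by
  cases h with
  | ins c1 c2 a b x hax hxb =>
    refine ⟨ins_pairwise hax hxb hc, ?_, ?_⟩
    · rw [head_cons c1 (x :: b :: c2) a, ← head_cons c1 (b :: c2) a, hh]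
    · rw [last_cons] at hl ⊢
      simp only [List.getLast?_cons_cons] at hl ⊢
      exact hl
  | del c1 c2 a x b =>
    refine ⟨hc.sublist ?_, ?_, ?_⟩
    · exact (List.Sublist.refl c1).append ((List.sublist_cons_self x (b :: c2)).cons₂ a)
    · rw [head_cons c1 (b :: c2) a, ← head_cons c1 (x :: b :: c2) a, hh]
    · rw [last_cons] at hl ⊢
      simp only [List.getLast?_cons_cons] at hl ⊢
      exact hl

/-- At all times, the values along the chain reachable from `head` are strictly
increasing, starting at `head` with value `-∞` and ending at `tail` with
value `+∞`. -/
theorem stmt12 : ∀ c : List E,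
    Relation.ReflTransGen WriteStep [⊥, ⊤] c →
    c.Chain' (· < ·) ∧ c.head? = some ⊥ ∧ c.getLast? = some ⊤ := by
  intro c h
  have key : c.Pairwise (· < ·) ∧ c.head? = some ⊥ ∧ c.getLast? = some ⊤ := by
    induction h with
    | refl =>
      refine ⟨?_, rfl, rfl⟩
      simp [List.pairwise_cons]
    | tail _ step ih => exact step_pres step ih.1 ih.2.1 ih.2.2
  exact ⟨List.isChain_iff_pairwise.mpr key.1, key.2⟩
end

section
/- Version-validated consistency: suppose a process reads version ver of node prev at time t1, then reads prev.deleted = false and prev.next = curr at times in (t1, t2), and at time t2 successfully executes tryLockAtVersion(prev, ver). Then at time t2 (while the lock is held), prev.deleted = false and prev.next = curr still hold. -/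
/-- Version-validated consistency: fields `deleted` and `next` of a node are
written only while its versioned lock is held (lock value odd).  If a process
reads version `ver` (even) at `t1`, reads `deleted = false` and `next = curr`
at times in `[t1, t2]`, and `tryLockAtVersion ver` succeeds at `t2` (the lock
value at `t2` is still `ver`), then at `t2` the node still satisfies
`deleted = false` and `next = curr`. -/
theorem stmt16 {β : Type} (lockVal : ℕ → ℕ) (deleted : ℕ → Bool) (next : ℕ → β)
    (hlock : ∀ t, lockVal (t + 1) = lockVal t ∨ lockVal (t + 1) = lockVal t + 1)
    (hwrite : ∀ t, (deleted (t + 1) = deleted t ∧ next (t + 1) = next t) ∨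
      Odd (lockVal t))
    (ver : ℕ) (hver : Even ver) (t1 t2 : ℕ) (h12 : t1 < t2)
    (hv1 : lockVal t1 = ver) (hv2 : lockVal t2 = ver)
    (curr : β)
    (ta : ℕ) (hta1 : t1 ≤ ta) (hta2 : ta ≤ t2) (hdel : deleted ta = false)
    (tb : ℕ) (htb1 : t1 ≤ tb) (htb2 : tb ≤ t2) (hnext : next tb = curr) :
    deleted t2 = false ∧ next t2 = curr := by
  have mono : ∀ s t : ℕ, s ≤ t → lockVal s ≤ lockVal t := by
    intro s t hst
    induction t with
    | zero =>
      have hs : s = 0 := by omega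
      simp [hs]
    | succ n ih =>
      rcases Nat.lt_or_ge s (n+1) with h | h
      · have := ih (by omega)
        rcases hlock n with h' | h' <;> omega
      · have hs : s = n + 1 := by omega
        simp [hs]
  have const : ∀ t : ℕ, t1 ≤ t → t ≤ t2 →
      deleted t = deleted t1 ∧ next t = next t1 := by
    intro t ht1 ht2
    induction t with
    | zero =>
      have : t1 = 0 := by omega
      simp [this]
    | succ n ih =>
      rcases Nat.lt_or_ge n t1 with h | h
      · have : t1 = n + 1 := by omega
        simp [this]
      · have ihn := ih h (by omega)
        have heq : lockVal n = ver := by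
          have h1 := mono t1 n h
          have h2 := mono n t2 (by omega)
          omega
        rcases hwrite n with ⟨hd, hn⟩ | hodd
        · exact ⟨hd.trans ihn.1, hn.trans ihn.2⟩
        · rw [heq] at hodd
          exact absurd hver (Nat.not_even_iff_odd.mpr hodd)
  have h2 := const t2 (by omega) le_rfl
  have ha := const ta hta1 hta2
  have hb := const tb htb1 htb2
  refine ⟨?_, ?_⟩
  · rw [h2.1, ← ha.1, hdel]
  · rw [h2.2, ← hb.2, hnext]
end

section
/- Monotone version numbers linearize critical sections: if each of two operations performs a successful tryLockAtVersion and a subsequent unlockAndIncrementVersion on the same versioned lock, then their critical sections are disjoint intervals, and the one that acquired at the smaller version precedes the other entirely. -/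
lemma stmt19_mono (v : ℕ → ℕ)
    (htrace : ∀ t, v (t + 1) = v t ∨
      (Even (v t) ∧ v (t + 1) = v t + 1) ∨ (Odd (v t) ∧ v (t + 1) = v t + 1)) :
    Monotone v := by
  apply monotone_nat_of_le_succ
  intro n
  rcases htrace n with h | ⟨_, h⟩ | ⟨_, h⟩ <;> omega

/-- Monotone versions linearize critical sections: if two operations each
perform a successful `tryLockAtVersion` (at times `l1 < l2`, at even values)
followed by an `unlockAndIncrementVersion` (at times `u1`, `u2`) on the same
versioned lock, then the acquisition versions are strictly ordered and the
first critical section ends entirely before the second begins. -/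
theorem stmt19 (v : ℕ → ℕ)
    (htrace : ∀ t, v (t + 1) = v t ∨
      (Even (v t) ∧ v (t + 1) = v t + 1) ∨ (Odd (v t) ∧ v (t + 1) = v t + 1))
    (l1 u1 l2 u2 : ℕ)
    (hlock1 : Even (v l1) ∧ v (l1 + 1) = v l1 + 1)
    (hunlock1 : l1 < u1 ∧ v u1 = v l1 + 1 ∧ v (u1 + 1) = v l1 + 2)
    (hlock2 : Even (v l2) ∧ v (l2 + 1) = v l2 + 1)
    (hunlock2 : l2 < u2 ∧ v u2 = v l2 + 1 ∧ v (u2 + 1) = v l2 + 2)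
    (hord : l1 < l2) :
    v l1 < v l2 ∧ u1 < l2 := by
  have hmono := stmt19_mono v htrace
  have h1 : v (l1 + 1) ≤ v l2 := hmono (by omega)
  have hne : v l2 ≠ v l1 + 1 := by
    intro h
    have := hlock2.1
    rw [h] at this
    rcases hlock1.1 with ⟨k, hk⟩
    rcases this with ⟨m, hm⟩
    omega
  have hgt : v l1 + 2 ≤ v l2 := by
    rw [hlock1.2] at h1; omega
  constructor
  · omega
  · by_contra hle
    have : v l2 ≤ v u1 := hmono (by omega)
    omega
end
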